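/- Suppose a pseudo-Riemannian manifold (M,g) carries a concircular vector field φ with ∇_Y φ = ρ Y and dρ = K φ♭ for a constant K (a special concircular field). Then the pair (a, λ) with a = φ♭ ⊗ φ♭ and λ = ρ φ♭ satisfies the Sinyukov equation (∇_Z a)(X,Y) = λ(X) g(Y,Z) + λ(Y) g(X,Z), together with (∇_Y λ)(X) = K a(X,Y) + ρ² g(X,Y) and ∇_X(ρ²) = 2K λ(X) when additionally μ := ρ² satisfies ∇μ = 2Kλ. -/
import Mathlib


/-- A special concircular field `φ` (with `∇_Y φ = ρ Y` and
`dρ = K φ♭`, `K` constant) produces a solution `(a, λ)` of Sinyukov's equation with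
`a = φ♭ ⊗ φ♭` and `λ = ρ φ♭`, together with `(∇_Y λ)(X) = K a(X,Y) + ρ² g(X,Y)`,
and `∇(ρ²) = 2Kλ` whenever `μ := ρ²` satisfies that equation. -/
theorem special_concircular_gives_sinyukov_solution
    {F : Type*} [CommRing F] [Algebra ℝ F]
    {V : Type*} [AddCommGroup V] [Module F V]
    (g : V → V → F) (hgsymm : ∀ X Y, g X Y = g Y X)
    (hgFlin : ∀ (f : F) (v X : V), g (f • v) X = f * g v X)
    (Dfun : V → F → F)
    (Dvec : V → V → V)
    (Dcov : V → (V → F) → (V → F))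
    (Dbil : V → (V → V → F) → (V → V → F))
    -- metric compatibility combined with Leibniz: ∇_Z (g(v,·)) = g(∇_Z v, ·)
    (hgpar : ∀ (Z : V) (v : V), Dcov Z (fun X => g v X) = fun X => g (Dvec Z v) X)
    -- Leibniz rule for products of covector fields
    (hLeibBil : ∀ (Z : V) (c₁ c₂ : V → F),
      Dbil Z (fun X Y => c₁ X * c₂ Y)
        = fun X Y => Dcov Z c₁ X * c₂ Y + c₁ X * Dcov Z c₂ Y)
    -- Leibniz rule for a function times a covector field
    (hLeibFun : ∀ (Z : V) (f : F) (c : V → F),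
      Dcov Z (fun X => f * c X) = fun X => Dfun Z f * c X + f * Dcov Z c X)
    (phi : V) (rho : F) (K : ℝ)
    -- φ is concircular: ∇_Y φ = ρ Y
    (hconc : ∀ Y : V, Dvec Y phi = rho • Y)
    -- φ is special with constant K: dρ = K φ♭
    (hspec : ∀ X : V, Dfun X rho = K • g X phi)
    (a : V → V → F) (ha : ∀ X Y, a X Y = g phi X * g phi Y)
    (lam : V → F) (hlam : ∀ X, lam X = rho * g phi X) :
    -- Sinyukov's equation
    (∀ Z X Y, Dbil Z a X Y = lam X * g Y Z + lam Y * g X Z) ∧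
    -- (∇_Y λ)(X) = K a(X,Y) + ρ² g(X,Y)
    (∀ Y X, Dcov Y lam X = K • a X Y + (rho * rho) * g X Y) ∧
    -- ∇(ρ²) = 2Kλ when μ := ρ² satisfies ∇μ = 2Kλ
    ((∀ X, Dfun X (rho * rho) = (2 * K) • lam X) →
      ∀ X, Dfun X (rho * rho) = (2 * K) • lam X) := by
  have hafun : a = fun X Y => g phi X * g phi Y := by
    funext X Y; exact ha X Y
  have hlamfun : lam = fun X => rho * g phi X := by
    funext X; exact hlam X
  refine ⟨?_, ?_, fun h => h⟩
  · intro Z X Y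
    rw [hafun, hLeibBil, hgpar, hconc, hlam, hlam]
    simp only [hgFlin]
    rw [hgsymm Y Z, hgsymm X Z]
    ring
  · intro Y X
    rw [hlamfun, hLeibFun, hgpar, hconc, hspec, ha]
    simp only [hgFlin, Algebra.smul_def]
    rw [hgsymm Y phi, hgsymm Y X]
    ring
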